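/- Let f be in the class C and suppose Ψ_f is lattice distributed on ℤ (i.e. dΨ_f(ℤ) = 1 and dΨ_f(βℤ) < 1 for every β > 1). Then for every A > 0 there is a constant K(A) such that #{p ≤ x : p prime, f(p) ∉ ℤ} ≤ K(A)·x·(log x)^{−A} for all x ≥ 2. -/

import Mathlib

open MeasureTheory Filter

noncomputable section

/-- A strongly additive arithmetic function: `f (m * n) = f m + f n` for coprime `m, n`,
and `f (p ^ k) = f p` for every prime `p` and `k ≥ 1`. -/
def StronglyAdditive (f : ℕ → ℝ) : Prop :=
  (∀ m n : ℕ, Nat.Coprime m n → f (m * n) = f m + f n) ∧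
    (∀ p k : ℕ, p.Prime → 1 ≤ k → f (p ^ k) = f p)

/-- The finset of primes `p ≤ x`. -/
def primesBelow (x : ℝ) : Finset ℕ :=
  (Finset.range (⌊x⌋₊ + 1)).filter Nat.Prime

/-- `μ(f;x) = Σ_{p ≤ x} f(p)/p`. -/
def muf (f : ℕ → ℝ) (x : ℝ) : ℝ := ∑ p ∈ primesBelow x, f p / p

/-- `σ²(f;x) = Σ_{p ≤ x} (f(p)²/p)(1 − 1/p)`. -/
def sigma2 (f : ℕ → ℝ) (x : ℝ) : ℝ :=
  ∑ p ∈ primesBelow x, f p ^ 2 / p * (1 - 1 / p)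

/-- `σ(f;x)`. -/
def sigmaf (f : ℕ → ℝ) (x : ℝ) : ℝ := Real.sqrt (sigma2 f x)

/-- `D_f(x;Δ) = (1/x)·#{n ≤ x : f(n) ≥ μ(f;x) + Δ·σ(f;x)}`. -/
def Df (f : ℕ → ℝ) (x Δ : ℝ) : ℝ :=
  (((Finset.Icc 1 ⌊x⌋₊).filter fun n => muf f x + Δ * sigmaf f x ≤ f n).card : ℝ) / x

/-- A (right-continuous, nondecreasing) Stieltjes function is a distribution function if it
tends to `0` at `−∞` and to `1` at `+∞`. -/
def IsDistributionFunction (Ψ : StieltjesFunction ℝ) : Prop :=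
  Tendsto (fun t => Ψ t) atBot (nhds (0 : ℝ)) ∧ Tendsto (fun t => Ψ t) atTop (nhds (1 : ℝ))

/-- `loglog x`. -/
def loglog (x : ℝ) : ℝ := Real.log (Real.log x)

/-- Membership in the class `𝒞`, with associated distribution function `Ψ` (denoted `Ψ_f`). -/
structure InClassC (f : ℕ → ℝ) (Ψ : StieltjesFunction ℝ) : Prop where
  strongAdd : StronglyAdditive f
  pos : ∀ p : ℕ, p.Prime → 0 < f p
  tail : ∀ A : ℝ, 0 < A → ∃ c : ℝ, 0 < c ∧ ∀ x : ℝ, 2 ≤ x → ∀ t : ℝ, 0 ≤ t →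
    (((primesBelow x).filter fun p => t ≤ f p).card : ℝ) ≤
      c * Real.exp (-A * t) * ((primesBelow x).card : ℝ)
  distrib : IsDistributionFunction Ψ
  secondMoment : 0 < ∫ t, t ^ 2 ∂Ψ.measure
  approx : ∀ k : ℝ, 0 < k → ∃ c : ℝ, 0 < c ∧ ∀ x : ℝ, 2 ≤ x → ∀ t : ℝ,
    |(((primesBelow x).filter fun p => f p ≤ t).card : ℝ) / ((primesBelow x).card : ℝ) - Ψ t|
      ≤ c * Real.log x ^ (-k)

/-- `Ψ` is not lattice distributed: `dΨ(αℤ) < 1` for every `α > 0`. -/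
def NotLattice (Ψ : StieltjesFunction ℝ) : Prop :=
  ∀ α : ℝ, 0 < α → Ψ.measure {x : ℝ | ∃ n : ℤ, x = α * n} < 1

/-- `Ψ` is lattice distributed on `ℤ`: `dΨ(ℤ) = 1` and `dΨ(βℤ) < 1` for every `β > 1`. -/
def LatticeOnZ (Ψ : StieltjesFunction ℝ) : Prop :=
  Ψ.measure {x : ℝ | ∃ n : ℤ, x = (n : ℝ)} = 1 ∧
    ∀ β : ℝ, 1 < β → Ψ.measure {x : ℝ | ∃ n : ℤ, x = β * n} < 1

/-!
Since `dΨ_f` is carried by `ℤ`, `Ψ_f` is constant on every `[k, k + 1)`. Comparing the counts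
`#{p ≤ x : f(p) ≤ t}` at `t = k` and at the largest value of `f(p)` in `(k, k + 1)` with
`π(x) Ψ_f(k)`, the approximation hypothesis with exponent `A + 1` shows that at most
`2c (log x)^(-A-1) π(x)` primes have `k < f(p) < k + 1`. As `f(p) > 0`, a prime with `f(p) ∉ ℤ`
lies in one of these bands with `k < T = ⌈A log log x⌉`, or has `f(p) ≥ T`; the exponential tail
bounds the latter by `c₁ e^(-T) π(x) ≤ c₁ (log x)^(-A) π(x)`, while
`T (log x)^(-A-1) ≤ (A + 1) (log x)^(-A)` and `π(x) ≤ x`.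
-/

open Finset

namespace StieltjesFunction

lemma eq_of_measure_Ioc_eq_zero (Ψ : StieltjesFunction ℝ) {a b : ℝ} (hab : a ≤ b)
    (h : Ψ.measure (Set.Ioc a b) = 0) : Ψ b = Ψ a := by
  rw [Ψ.measure_Ioc, ENNReal.ofReal_eq_zero] at h
  linarith [Ψ.mono hab]

lemma eq_floor_of_measure_range_intCast_eq_one (Ψ : StieltjesFunction ℝ)
    (hΨ : IsDistributionFunction Ψ) (hℤ : Ψ.measure (Set.range ((↑) : ℤ → ℝ)) = 1) (t : ℝ) :
    Ψ t = Ψ ⌊t⌋ := by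
  have := Ψ.isProbabilityMeasure hΨ.1 hΨ.2
  have hcompl : Ψ.measure (Set.range ((↑) : ℤ → ℝ))ᶜ = 0 :=
    (prob_compl_eq_zero_iff (Set.countable_range _).measurableSet).mpr hℤ
  refine Ψ.eq_of_measure_Ioc_eq_zero (Int.floor_le t) (measure_mono_null ?_ hcompl)
  rintro _ ⟨hlt, hle⟩ ⟨n, rfl⟩
  have : ⌊t⌋ < n := by exact_mod_cast hlt
  have : n ≤ ⌊t⌋ := Int.le_floor.mpr hle
  omega

end StieltjesFunction

lemma LatticeOnZ.eq_of_mem_Ico {Ψ : StieltjesFunction ℝ} (hlat : LatticeOnZ Ψ)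
    (hΨ : IsDistributionFunction Ψ) (k : ℤ) {t : ℝ} (ht : t ∈ Set.Ico (k : ℝ) (k + 1)) :
    Ψ t = Ψ k := by
  have hℤ : Ψ.measure (Set.range ((↑) : ℤ → ℝ)) = 1 := by
    simpa only [Set.range, eq_comm] using hlat.1
  rw [Ψ.eq_floor_of_measure_range_intCast_eq_one hΨ hℤ, Int.floor_eq_iff.mpr ht]

section Counting

variable {α : Type*} (S : Finset α) (g : α → ℝ)

lemma exists_card_filter_Ioo_add_card_filter_le {a b : ℝ} (hab : a < b) :
    ∃ t ∈ Set.Ico a b,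
      #{p ∈ S | a < g p ∧ g p < b} + #{p ∈ S | g p ≤ a} ≤ #{p ∈ S | g p ≤ t} := by
  classical
  set B := {p ∈ S | a < g p ∧ g p < b}
  rcases B.eq_empty_or_nonempty with hB | hB
  · exact ⟨a, ⟨le_rfl, hab⟩, by rw [hB, card_empty, zero_add]⟩
  obtain ⟨p, hp, hmax⟩ := B.exists_max_image g hB
  obtain ⟨hap, hpb⟩ := (mem_filter.mp hp).2
  refine ⟨g p, ⟨hap.le, hpb⟩, ?_⟩
  rw [← card_union_of_disjoint]
  · refine card_le_card fun q hq => ?_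
    rcases mem_union.mp hq with hq | hq
    · exact mem_filter.mpr ⟨(mem_filter.mp hq).1, hmax q hq⟩
    · exact mem_filter.mpr ⟨(mem_filter.mp hq).1, (mem_filter.mp hq).2.trans hap.le⟩
  · refine disjoint_left.mpr fun q hq hq' => ?_
    linarith [(mem_filter.mp hq).2.1, (mem_filter.mp hq').2]

lemma card_filter_Ioo_le_of_abs_sub_le {Ψ : ℝ → ℝ} {a b ε : ℝ} (hab : a < b)
    (hconst : ∀ t ∈ Set.Ico a b, Ψ t = Ψ a)
    (happrox : ∀ t, |(#{p ∈ S | g p ≤ t} : ℝ) / #S - Ψ t| ≤ ε) :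
    (#{p ∈ S | a < g p ∧ g p < b} : ℝ) ≤ 2 * ε * #S := by
  rcases S.eq_empty_or_nonempty with rfl | hS
  · simp
  have hn : (0 : ℝ) < #S := by exact_mod_cast hS.card_pos
  obtain ⟨t, ht, hle⟩ := exists_card_filter_Ioo_add_card_filter_le S g hab
  have hupper := (abs_le.mp (happrox t)).2
  have hlower := (abs_le.mp (happrox a)).1
  rw [hconst t ht] at hupper
  have hdiff : ((#{p ∈ S | g p ≤ t} : ℝ) - #{p ∈ S | g p ≤ a}) / #S ≤ 2 * ε := by
    rw [sub_div]; linarith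
  rw [div_le_iff₀ hn] at hdiff
  have hle' : (#{p ∈ S | a < g p ∧ g p < b} : ℝ) + #{p ∈ S | g p ≤ a} ≤ #{p ∈ S | g p ≤ t} := by
    exact_mod_cast hle
  linarith

open Classical in
lemma card_filter_not_intCast_le (hg : ∀ p ∈ S, 0 ≤ g p) (T : ℕ) :
    #{p ∈ S | ¬∃ k : ℤ, g p = k} ≤
      ∑ k ∈ range T, #{p ∈ S | (k : ℝ) < g p ∧ g p < k + 1} + #{p ∈ S | (T : ℝ) ≤ g p} := by
  refine (card_le_card fun p hp => ?_).trans ((card_union_le _ _).trans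
    (Nat.add_le_add_right card_biUnion_le _))
  obtain ⟨hpS, hnotint⟩ := mem_filter.mp hp
  rcases le_or_gt (T : ℝ) (g p) with hT | hT
  · exact mem_union_right _ (mem_filter.mpr ⟨hpS, hT⟩)
  have hfloor : (⌊g p⌋₊ : ℝ) < g p := (Nat.floor_le (hg p hpS)).lt_of_ne
    fun h => hnotint ⟨⌊g p⌋₊, by exact_mod_cast h.symm⟩
  refine mem_union_left _ (mem_biUnion.mpr ⟨⌊g p⌋₊, mem_range.mpr ?_,
    mem_filter.mpr ⟨hpS, hfloor, Nat.lt_floor_add_one _⟩⟩)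
  exact_mod_cast hfloor.trans hT

end Counting

lemma card_primesBelow_le {x : ℝ} (hx : 0 ≤ x) : (#(primesBelow x) : ℝ) ≤ x := by
  have hcard : #(primesBelow x) ≤ ⌊x⌋₊ := by
    rw [show primesBelow x = Nat.primesLE ⌊x⌋₊ from rfl, Nat.primesLE_eq_filter_Icc_one]
    exact (card_filter_le _ _).trans (Nat.card_Icc 1 _).le
  exact (Nat.cast_le.mpr hcard).trans (Nat.floor_le hx)

lemma natCeil_mul_log_mul_rpow_le {A L : ℝ} (hA : 0 ≤ A) (hL : 0 < L) :
    (⌈A * Real.log L⌉₊ : ℝ) * L ^ (-(A + 1)) ≤ (A + 1) * L ^ (-A) := by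
  have hceil : (⌈A * Real.log L⌉₊ : ℝ) ≤ (A + 1) * L := by
    rcases le_or_gt 1 L with hL1 | hL1
    · have hlog := Real.log_le_sub_one_of_pos hL
      have := Nat.ceil_lt_add_one (mul_nonneg hA (Real.log_nonneg hL1))
      nlinarith
    · rw [Nat.ceil_eq_zero.mpr (mul_nonpos_of_nonneg_of_nonpos hA (Real.log_neg hL hL1).le)]
      simp only [Nat.cast_zero]; positivity
  calc (⌈A * Real.log L⌉₊ : ℝ) * L ^ (-(A + 1)) ≤ (A + 1) * L * L ^ (-(A + 1)) := by gcongr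
    _ = (A + 1) * L ^ (-A) := by
      rw [show -A = 1 + -(A + 1) by ring, Real.rpow_add hL, Real.rpow_one, mul_assoc]

lemma exp_neg_natCeil_mul_log_le {A L : ℝ} (hL : 0 < L) :
    Real.exp (-⌈A * Real.log L⌉₊) ≤ L ^ (-A) := by
  rw [Real.rpow_def_of_pos hL, Real.exp_le_exp]
  linarith [Nat.le_ceil (A * Real.log L)]

/-- Lemma 4.18: if `Ψ_f` is lattice distributed on `ℤ` then for every `A > 0`,
`#{p ≤ x : f(p) ∉ ℤ} ≤ K(A)·x·(log x)^{−A}`. -/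
theorem stmt17 (f : ℕ → ℝ) (Ψ : StieltjesFunction ℝ) (hf : InClassC f Ψ)
    (hlat : LatticeOnZ Ψ) :
    ∀ A : ℝ, 0 < A → ∃ K : ℝ, 0 < K ∧ ∀ x : ℝ, 2 ≤ x →
      ({p : ℕ | p ∈ primesBelow x ∧ ¬∃ k : ℤ, f p = (k : ℝ)}.ncard : ℝ)
        ≤ K * x * Real.log x ^ (-A) := by
  classical
  intro A hA
  obtain ⟨c, hc, happrox⟩ := hf.approx (A + 1) (by linarith)
  obtain ⟨c₁, hc₁, htail⟩ := hf.tail 1 one_pos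
  refine ⟨2 * c * (A + 1) + c₁, by positivity, fun x hx => ?_⟩
  set S := primesBelow x
  set L := Real.log x
  set T := ⌈A * Real.log L⌉₊
  have hL : 0 < L := Real.log_pos (by linarith)
  have hband (k : ℕ) :
      (#{p ∈ S | (k : ℝ) < f p ∧ f p < k + 1} : ℝ) ≤ 2 * (c * L ^ (-(A + 1))) * #S := by
    refine card_filter_Ioo_le_of_abs_sub_le S f (by linarith) (fun t ht => ?_) (happrox x hx)
    exact_mod_cast hlat.eq_of_mem_Ico hf.distrib k (by exact_mod_cast ht)
  have hcover := card_filter_not_intCast_le S f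
    (fun p hp => (hf.pos p (mem_filter.mp hp).2).le) T
  have hT := htail x hx T T.cast_nonneg
  rw [neg_one_mul] at hT
  calc ({p : ℕ | p ∈ S ∧ ¬∃ k : ℤ, f p = (k : ℝ)}.ncard : ℝ)
      = #{p ∈ S | ¬∃ k : ℤ, f p = (k : ℝ)} := by
        rw [← Set.ncard_coe_finset, coe_filter]
    _ ≤ ∑ k ∈ range T, (#{p ∈ S | (k : ℝ) < f p ∧ f p < k + 1} : ℝ)
          + #{p ∈ S | (T : ℝ) ≤ f p} := by exact_mod_cast hcover
    _ ≤ T * (2 * (c * L ^ (-(A + 1))) * #S) + c₁ * Real.exp (-T) * #S := by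
        gcongr
        exact (sum_le_card_nsmul _ _ _ fun k _ => hband k).trans_eq (by simp)
    _ ≤ (A + 1) * L ^ (-A) * (2 * c * #S) + c₁ * L ^ (-A) * #S := by
        rw [show (T : ℝ) * (2 * (c * L ^ (-(A + 1))) * #S)
          = T * L ^ (-(A + 1)) * (2 * c * #S) by ring]
        gcongr ?_ * _ + _ * ?_ * _
        · exact natCeil_mul_log_mul_rpow_le hA.le hL
        · exact exp_neg_natCeil_mul_log_le hL
    _ = (2 * c * (A + 1) + c₁) * L ^ (-A) * #S := by ring
    _ ≤ (2 * c * (A + 1) + c₁) * x * L ^ (-A) := by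
        rw [mul_right_comm _ x]
        gcongr
        exact card_primesBelow_le (by linarith)
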